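/- Implication inversion is admissible in G3iM^w: if Γ, φ→ψ ⇒ Δ is derivable, then Γ, ψ ⇒ Δ is derivable. -/

import Mathlib

/-- Formulas of intuitionistic (monotone) modal logic over atoms `ℕ`,
with conjunction, disjunction, implication, falsum and a box modality. -/
inductive Fm : Type where
  | atom : ℕ → Fm
  | bot  : Fm
  | and  : Fm → Fm → Fm
  | or   : Fm → Fm → Fm
  | imp  : Fm → Fm → Fm
  | box  : Fm → Fm
deriving DecidableEq

/-- `⊤` as the abbreviation `⊥ → ⊥`. -/
def Fm.top : Fm := Fm.imp Fm.bot Fm.bot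
/-- The sequent calculus `G3iM^w` for intuitionistic monotone modal logic:
single-conclusion sequents with a multiset antecedent. -/
inductive G3 : Multiset Fm → Fm → Prop
  | ax (Γ : Multiset Fm) (p : ℕ) : G3 (Fm.atom p ::ₘ Γ) (Fm.atom p)
  | lbot (Γ : Multiset Fm) (φ : Fm) : G3 (Fm.bot ::ₘ Γ) φ
  | land (Γ : Multiset Fm) (φ ψ θ : Fm) :
      G3 (φ ::ₘ ψ ::ₘ Γ) θ → G3 (φ.and ψ ::ₘ Γ) θ
  | rand (Γ : Multiset Fm) (φ ψ : Fm) : G3 Γ φ → G3 Γ ψ → G3 Γ (φ.and ψ)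
  | lor (Γ : Multiset Fm) (φ ψ θ : Fm) :
      G3 (φ ::ₘ Γ) θ → G3 (ψ ::ₘ Γ) θ → G3 (φ.or ψ ::ₘ Γ) θ
  | ror₁ (Γ : Multiset Fm) (φ ψ : Fm) : G3 Γ φ → G3 Γ (φ.or ψ)
  | ror₂ (Γ : Multiset Fm) (φ ψ : Fm) : G3 Γ ψ → G3 Γ (φ.or ψ)
  | limp (Γ : Multiset Fm) (φ ψ θ : Fm) :
      G3 (φ.imp ψ ::ₘ Γ) φ → G3 (ψ ::ₘ Γ) θ → G3 (φ.imp ψ ::ₘ Γ) θ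
  | rimp (Γ : Multiset Fm) (φ ψ : Fm) : G3 (φ ::ₘ Γ) ψ → G3 Γ (φ.imp ψ)
  | m (Γ : Multiset Fm) (φ ψ : Fm) : G3 {φ} ψ → G3 (φ.box ::ₘ Γ) (ψ.box)

theorem G3.cons_swap {a b δ : Fm} {Γ : Multiset Fm} (h : G3 (a ::ₘ b ::ₘ Γ) δ) :
    G3 (b ::ₘ a ::ₘ Γ) δ :=
  Multiset.cons_swap a b Γ ▸ h

/- The implication `φ → ψ` is principal only in an instance of `L→`, whose right premise is the
sequent sought; in every other rule it is a side formula, and the same rule applies to the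
induction hypothesis. -/
theorem G3.imp_inversion_of_eq {φ ψ δ : Fm} {Γ Δ : Multiset Fm} (h : G3 Δ δ)
    (hΔ : Δ = φ.imp ψ ::ₘ Γ) : G3 (ψ ::ₘ Γ) δ := by
  induction h generalizing Γ with
  | ax _ p =>
    obtain ⟨⟨⟩, -⟩ | ⟨-, cs, rfl, rfl⟩ := Multiset.cons_eq_cons.1 hΔ
    exact (G3.ax _ p).cons_swap
  | lbot _ θ =>
    obtain ⟨⟨⟩, -⟩ | ⟨-, cs, rfl, rfl⟩ := Multiset.cons_eq_cons.1 hΔ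
    exact (G3.lbot _ θ).cons_swap
  | land _ a b θ _ ih =>
    obtain ⟨⟨⟩, -⟩ | ⟨-, cs, rfl, rfl⟩ := Multiset.cons_eq_cons.1 hΔ
    have ih' : G3 (ψ ::ₘ a ::ₘ b ::ₘ cs) θ :=
      ih (by rw [Multiset.cons_swap b, Multiset.cons_swap a])
    rw [Multiset.cons_swap ψ a, Multiset.cons_swap ψ b] at ih'
    exact (G3.land _ a b θ ih').cons_swap
  | rand _ a b _ _ ih₁ ih₂ => exact G3.rand _ a b (ih₁ hΔ) (ih₂ hΔ)
  | lor _ a b θ _ _ ih₁ ih₂ =>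
    obtain ⟨⟨⟩, -⟩ | ⟨-, cs, rfl, rfl⟩ := Multiset.cons_eq_cons.1 hΔ
    exact (G3.lor _ a b θ (ih₁ (Multiset.cons_swap _ _ _)).cons_swap
      (ih₂ (Multiset.cons_swap _ _ _)).cons_swap).cons_swap
  | ror₁ _ a b _ ih => exact G3.ror₁ _ a b (ih hΔ)
  | ror₂ _ a b _ ih => exact G3.ror₂ _ a b (ih hΔ)
  | limp _ a b θ _ hright ihleft ihright =>
    obtain ⟨⟨⟩, rfl⟩ | ⟨-, cs, rfl, rfl⟩ := Multiset.cons_eq_cons.1 hΔ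
    · exact hright
    · exact (G3.limp _ a b θ (ihleft (Multiset.cons_swap _ _ _)).cons_swap
        (ihright (Multiset.cons_swap _ _ _)).cons_swap).cons_swap
  | rimp _ a b _ ih =>
    subst hΔ
    exact G3.rimp _ a b (ih (Multiset.cons_swap _ _ _)).cons_swap
  | m _ a b hab _ =>
    obtain ⟨⟨⟩, -⟩ | ⟨-, cs, rfl, rfl⟩ := Multiset.cons_eq_cons.1 hΔ
    exact (G3.m _ a b hab).cons_swap

/-- Implication inversion is admissible in `G3iM^w`. -/
theorem g3_imp_inversion (Γ : Multiset Fm) (φ ψ δ : Fm)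
    (h : G3 (φ.imp ψ ::ₘ Γ) δ) : G3 (ψ ::ₘ Γ) δ :=
  h.imp_inversion_of_eq rfl
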